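/- arXiv:1710.04385 — 5 statements merged into one kernel-verified Lean document; each statement's English description precedes it below -/
import Mathlib

section
/- Let S be a finite interval of integers containing {2p−1, 2p, …, 2q+1} for integers p ≤ q, let Q = Q[p,q] be the Nicolai supercharge on ℋ_S, and let H = Q Q* + Q* Q be the Nicolai Hamiltonian. Then for all integers k, l with p ≤ k < l ≤ q and every f ∈ Ξ̂_{k,l}, the local fermion operator Q(f) and its adjoint commute with H: H Q(f) = Q(f) H and H Q(f)* = Q(f)* H. (Finite-lattice version of: the Nicolai model possesses infinitely many hidden local fermion symmetries.) -/
/-!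
The supercharge `Q` and its adjoint are sums of cubic monomials `q_{2i}`, `q_{2i}*` in the
Jordan–Wigner operators, while `Q(f)` is a monomial of odd degree `2(l - k) + 1`. Every such
cubic monomial anticommutes with `Q(f)`. If its sites avoid `{2k, …, 2l}`, this is the canonical
anticommutation relations together with the oddness of both degrees. Otherwise the conditions
defining `Ξ̂_{k,l}` (no forbidden triplet, constant on the two boundary edges) force it to share a
factor `c♯_s` with `Q(f)`, and `(c♯_s)² = 0` makes both products vanish. So `Q` and `Q*`
anticommute with `Q(f)`, hence `H = Q Q* + Q* Q` commutes with `Q(f)`, and taking adjoints, with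
`Q(f)*`.
-/

namespace Nicolai

/-- Configurations on the finite interval `S = {a, …, b}` of integers:
`true` = occupied, `false` = empty. -/
abbrev Config (a b : ℤ) : Type := {i : ℤ // i ∈ Finset.Icc a b} → Bool

/-- The Hilbert space `ℋ_S` with orthonormal basis indexed by configurations. -/
abbrev Hs (a b : ℤ) : Type := EuclideanSpace ℂ (Config a b)

/-- The basis vector `e_g` associated to the configuration `g`. -/
noncomputable def e (a b : ℤ) (g : Config a b) : Hs a b := EuclideanSpace.single g 1

/-- The Jordan–Wigner sign exponent: the number of occupied sites strictly to the left of `i`. -/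
noncomputable def signCount (a b : ℤ) (g : Config a b) (i : ℤ) : ℕ :=
  (Finset.univ.filter fun j : {x : ℤ // x ∈ Finset.Icc a b} => j.1 < i ∧ g j = true).card

/-- The annihilation operator `c_i` (zero if `i ∉ S`). -/
noncomputable def cAnn (a b : ℤ) (i : ℤ) : Module.End ℂ (Hs a b) where
  toFun ψ := WithLp.toLp 2 fun g =>
    if hi : i ∈ Finset.Icc a b then
      if g ⟨i, hi⟩ = false then
        ((-1 : ℂ) ^ signCount a b g i) * ψ (Function.update g ⟨i, hi⟩ true)
      else 0
    else 0
  map_add' ψ φ := by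
    ext g
    simp only [PiLp.add_apply, PiLp.toLp_apply]
    split_ifs <;> simp [mul_add]
  map_smul' c ψ := by
    ext g
    simp only [PiLp.smul_apply, PiLp.toLp_apply, smul_eq_mul, RingHom.id_apply]
    split_ifs <;> ring

/-- The creation operator `c*_i` (zero if `i ∉ S`). -/
noncomputable def cCr (a b : ℤ) (i : ℤ) : Module.End ℂ (Hs a b) where
  toFun ψ := WithLp.toLp 2 fun g =>
    if hi : i ∈ Finset.Icc a b then
      if g ⟨i, hi⟩ = true then
        ((-1 : ℂ) ^ signCount a b g i) * ψ (Function.update g ⟨i, hi⟩ false)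
      else 0
    else 0
  map_add' ψ φ := by
    ext g
    simp only [PiLp.add_apply, PiLp.toLp_apply]
    split_ifs <;> simp [mul_add]
  map_smul' c ψ := by
    ext g
    simp only [PiLp.smul_apply, PiLp.toLp_apply, smul_eq_mul, RingHom.id_apply]
    split_ifs <;> ring

/-- `q_{2i} = c_{2i+1} c*_{2i} c_{2i−1}`. -/
noncomputable def qOp (a b i : ℤ) : Module.End ℂ (Hs a b) :=
  cAnn a b (2 * i + 1) * cCr a b (2 * i) * cAnn a b (2 * i - 1)

/-- The Nicolai supercharge `Q[k,l] = Σ_{i=k}^{l} q_{2i}`. -/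
noncomputable def QNic (a b k l : ℤ) : Module.End ℂ (Hs a b) :=
  ∑ i ∈ Finset.Icc k l, qOp a b i

/-- Membership in `Ξ̂_{k,l}`: a `{−1,+1}`-valued function on `{2k, …, 2l}` with no
forbidden sign triplet at interior even sites, constant on each two-site edge. -/
def memXi (k l : ℤ) (f : ℤ → ℤ) : Prop :=
  (∀ i ∈ Finset.Icc (2 * k) (2 * l), f i = 1 ∨ f i = -1) ∧
  (∀ i : ℤ, k < i → i < l →
    ¬(f (2 * i - 1) = -1 ∧ f (2 * i) = 1 ∧ f (2 * i + 1) = -1) ∧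
    ¬(f (2 * i - 1) = 1 ∧ f (2 * i) = -1 ∧ f (2 * i + 1) = 1)) ∧
  f (2 * k) = f (2 * k + 1) ∧ f (2 * l - 1) = f (2 * l)

/-- `ζ_i(+1) = c*_i`, `ζ_i(−1) = c_i`. -/
noncomputable def zeta (a b i : ℤ) (v : ℤ) : Module.End ℂ (Hs a b) :=
  if v = 1 then cCr a b i else if v = -1 then cAnn a b i else 0

/-- The local fermion operator `Q(f) = ζ_{2k}(f(2k)) ζ_{2k+1}(f(2k+1)) ⋯ ζ_{2l}(f(2l))`,
the product taken in increasing site order. -/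
noncomputable def QF (a b k l : ℤ) (f : ℤ → ℤ) : Module.End ℂ (Hs a b) :=
  ((List.range (2 * l - 2 * k + 1).toNat).map
    (fun j => zeta a b (2 * k + (j : ℤ)) (f (2 * k + (j : ℤ))))).prod

/-- `g` has a forbidden triplet at the even site `2i`. -/
def forbiddenAt (g : ℤ → Bool) (i : ℤ) : Prop :=
  (g (2 * i - 1) = false ∧ g (2 * i) = true ∧ g (2 * i + 1) = false) ∨
  (g (2 * i - 1) = true ∧ g (2 * i) = false ∧ g (2 * i + 1) = true)

/-- Membership in `Υ̂_{k,l}`: no forbidden triplet at interior even sites and the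
open SUSY boundary condition (only the values on `{2k, …, 2l}` are relevant). -/
def memUps (k l : ℤ) (g : ℤ → Bool) : Prop :=
  (∀ i : ℤ, k < i → i < l → ¬ forbiddenAt g i) ∧
  g (2 * k) = g (2 * k + 1) ∧ g (2 * l - 1) = g (2 * l)

/-- Extend a configuration on `S` to all of `ℤ` by `false`. -/
noncomputable def ext (a b : ℤ) (g : Config a b) : ℤ → Bool :=
  fun i => if h : i ∈ Finset.Icc a b then g ⟨i, h⟩ else false

/-- The charge `f ∈ Ξ̂_{k,l}` is applicable to the configuration `g`. -/
def applicable (k l : ℤ) (f : ℤ → ℤ) (g : ℤ → Bool) : Prop :=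
  ∀ i : ℤ, 2 * k ≤ i → i ≤ 2 * l → (f i = 1 → g i = false) ∧ (f i = -1 → g i = true)

/-- The configuration `f·g` resulting from the action of the charge `f ∈ Ξ̂_{k,l}` on `g`. -/
def applyCharge (k l : ℤ) (f : ℤ → ℤ) (g : ℤ → Bool) : ℤ → Bool :=
  fun i => if 2 * k ≤ i ∧ i ≤ 2 * l then decide (f i = 1) else g i

/-- `Reachable p q g₀ g`: `g` is obtained from `g₀` by finitely many applications of
applicable charges from `Ξ̂(p,q) = ⋃_{p ≤ k < l ≤ q} Ξ̂_{k,l}`. -/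
inductive Reachable (p q : ℤ) : (ℤ → Bool) → (ℤ → Bool) → Prop
  | refl (g : ℤ → Bool) : Reachable p q g g
  | step {g₀ g : ℤ → Bool} (k l : ℤ) (f : ℤ → ℤ) :
      Reachable p q g₀ g → p ≤ k → k < l → l ≤ q → memXi k l f → applicable k l f g →
      Reachable p q g₀ (applyCharge k l f g)

/-- The fermion parity operator `P e_g = (−1)^{#occupied sites} e_g`. -/
noncomputable def parity (a b : ℤ) : Module.End ℂ (Hs a b) where
  toFun ψ := WithLp.toLp 2 fun g =>
    ((-1 : ℂ) ^ (Finset.univ.filter fun j : {x : ℤ // x ∈ Finset.Icc a b} => g j = true).card)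
      * ψ g
  map_add' ψ φ := by
    ext g
    simp only [PiLp.add_apply, PiLp.toLp_apply]
    ring
  map_smul' c ψ := by
    ext g
    simp only [PiLp.smul_apply, PiLp.toLp_apply, smul_eq_mul, RingHom.id_apply]
    ring


section Anticommutation

variable {R : Type*} [Ring R]

theorem mul_list_prod_of_anticomm {X : R} {L : List R} (h : ∀ Y ∈ L, X * Y = -(Y * X)) :
    X * L.prod = (-1) ^ L.length * (L.prod * X) := by
  induction L with
  | nil => simp
  | cons Y L ih =>
    rw [List.forall_mem_cons] at h
    calc X * (Y * L.prod) = -(Y * (X * L.prod)) := by rw [← mul_assoc, h.1, neg_mul, mul_assoc]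
      _ = -(Y * ((-1) ^ L.length * (L.prod * X))) := by rw [ih h.2]
      _ = (-1) ^ (L.length + 1) * (Y * L.prod * X) := by
        rw [← ((Commute.neg_one_left Y).pow_left _).left_comm, pow_succ, mul_neg_one, neg_mul,
          mul_assoc Y]

theorem list_prod_mul_of_anticomm {X : R} {L : List R} (h : ∀ Y ∈ L, X * Y = -(Y * X)) :
    L.prod * X = (-1) ^ L.length * (X * L.prod) := by
  rw [mul_list_prod_of_anticomm h, ← mul_assoc, ← pow_add, Even.neg_one_pow ⟨_, rfl⟩,
    one_mul]

theorem commute_mul_of_anticomm {X Y A : R} (hX : X * A = -(A * X)) (hY : Y * A = -(A * Y)) :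
    Commute (X * Y) A := by
  rw [Commute, SemiconjBy, mul_assoc, hY, mul_neg, ← mul_assoc, hX, neg_mul, neg_neg, mul_assoc]

theorem commute_mul_add_mul_of_anticomm {X Y A : R} (hX : X * A = -(A * X))
    (hY : Y * A = -(A * Y)) : Commute (X * Y + Y * X) A :=
  (commute_mul_of_anticomm hX hY).add_left (commute_mul_of_anticomm hY hX)

theorem anticomm_star_of_anticomm_star [StarRing R] {X A : R} (h : star X * A = -(A * star X)) :
    X * star A = -(star A * X) := by
  have h' := congrArg star h
  simp only [star_mul, star_neg, star_star] at h'
  rw [h', neg_neg]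

end Anticommutation

/-- Only distinct sites are required to anticommute: at a single site `c i true * c i false +
c i false * c i true = 1` for the Jordan–Wigner operators. -/
structure IsFermionic {R ι : Type*} [Ring R] (c : ι → Bool → R) : Prop where
  mul_self : ∀ i t, c i t * c i t = 0
  anticomm : ∀ i j, i ≠ j → ∀ t s, c i t * c j s = -(c j s * c i t)

def monomial {R ι : Type*} [Ring R] (c : ι → Bool → R) (L : List (ι × Bool)) : R :=
  (L.map fun x => c x.1 x.2).prod

section Monomial

variable {R ι : Type*} [Ring R] {c : ι → Bool → R}

@[simp]
theorem monomial_nil : monomial c [] = 1 := rfl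

@[simp]
theorem monomial_cons (x : ι × Bool) (L : List (ι × Bool)) :
    monomial c (x :: L) = c x.1 x.2 * monomial c L := rfl

@[simp]
theorem monomial_append (L M : List (ι × Bool)) :
    monomial c (L ++ M) = monomial c L * monomial c M := by
  simp [monomial]

namespace IsFermionic

theorem mul_monomial (hc : IsFermionic c) {L : List (ι × Bool)} {i : ι} (t : Bool)
    (hi : i ∉ L.map Prod.fst) :
    c i t * monomial c L = (-1) ^ L.length * (monomial c L * c i t) := by
  rw [monomial, mul_list_prod_of_anticomm, List.length_map]
  simp only [List.mem_map, forall_exists_index, and_imp, forall_apply_eq_imp_iff₂]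
  intro x hx
  exact hc.anticomm _ _ (fun h => hi (List.mem_map.2 ⟨x, hx, h.symm⟩)) _ _

theorem monomial_anticomm_of_odd (hc : IsFermionic c) {L₁ L₂ : List (ι × Bool)}
    (h : ∀ x ∈ L₁, x.1 ∉ L₂.map Prod.fst) (h₁ : Odd L₁.length)
    (h₂ : Odd L₂.length) :
    monomial c L₁ * monomial c L₂ = -(monomial c L₂ * monomial c L₁) := by
  rw [monomial, list_prod_mul_of_anticomm, List.length_map, h₁.neg_one_pow, neg_one_mul]
  simp only [List.mem_map, forall_exists_index, and_imp, forall_apply_eq_imp_iff₂]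
  intro x hx
  rw [← neg_eq_iff_eq_neg, hc.mul_monomial _ (h x hx), h₂.neg_one_pow, neg_one_mul]

theorem monomial_mul_monomial_eq_zero (hc : IsFermionic c) {L₁ L₂ : List (ι × Bool)}
    (hL₁ : (L₁.map Prod.fst).Nodup) (hL₂ : (L₂.map Prod.fst).Nodup) {x : ι × Bool}
    (hx₁ : x ∈ L₁) (hx₂ : x ∈ L₂) :
    monomial c L₁ * monomial c L₂ = 0 := by
  obtain ⟨A, B, rfl⟩ := List.append_of_mem hx₁
  obtain ⟨C, D, rfl⟩ := List.append_of_mem hx₂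
  simp only [List.map_append, List.map_cons, List.nodup_middle, List.nodup_cons,
    List.mem_append, not_or] at hL₁ hL₂
  have hBC : x.1 ∉ (B ++ C).map Prod.fst := by simp [hL₁.1.2, hL₂.1.1]
  have hxx : ∀ Z, c x.1 x.2 * (c x.1 x.2 * Z) = 0 := fun Z => by
    rw [← mul_assoc, hc.mul_self, zero_mul]
  calc monomial c (A ++ x :: B) * monomial c (C ++ x :: D)
        = monomial c A * (c x.1 x.2 * monomial c (B ++ C)) * (c x.1 x.2 * monomial c D) := by
          simp only [monomial_append, monomial_cons, mul_assoc]
      _ = 0 := by rw [hc.mul_monomial _ hBC]; simp only [mul_assoc, hxx, mul_zero]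

end IsFermionic

end Monomial

noncomputable def fermionOp (a b i : ℤ) (t : Bool) : Module.End ℂ (Hs a b) :=
  if t then cCr a b i else cAnn a b i

section FermionOp

variable {a b : ℤ}

theorem fermionOp_apply_of_mem {i : ℤ} (hi : i ∈ Finset.Icc a b) (t : Bool) (ψ : Hs a b)
    (g : Config a b) :
    fermionOp a b i t ψ g = if g ⟨i, hi⟩ = t then
        (-1 : ℂ) ^ signCount a b g i * ψ (Function.update g ⟨i, hi⟩ (!t))
      else 0 := by
  cases t <;> exact dif_pos hi

theorem fermionOp_of_notMem {i : ℤ} (hi : i ∉ Finset.Icc a b) (t : Bool) :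
    fermionOp a b i t = 0 := by
  ext ψ g
  cases t <;> exact dif_neg hi

theorem signCount_update_of_le (g : Config a b) {i j : ℤ} (hj : j ∈ Finset.Icc a b)
    (h : i ≤ j) (v : Bool) :
    signCount a b (Function.update g ⟨j, hj⟩ v) i = signCount a b g i := by
  unfold signCount
  congr 1
  refine Finset.filter_congr fun x _ => ?_
  by_cases hx : x = ⟨j, hj⟩
  · subst hx; simp [h]
  · simp [Function.update_of_ne hx]

theorem signCount_update_true_of_lt (g : Config a b) {i j : ℤ} (hj : j ∈ Finset.Icc a b)
    (h : j < i) :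
    signCount a b (Function.update g ⟨j, hj⟩ true) i
      = signCount a b (Function.update g ⟨j, hj⟩ false) i + 1 := by
  unfold signCount
  rw [← Finset.card_insert_of_notMem (a := ⟨j, hj⟩) (by simp)]
  congr 1
  ext x
  by_cases hx : x = ⟨j, hj⟩
  · subst hx; simp [h]
  · simp [hx]

theorem neg_one_pow_signCount_update_not_of_lt (g : Config a b) {i j : ℤ}
    (hj : j ∈ Finset.Icc a b) (h : j < i) :
    (-1 : ℂ) ^ signCount a b (Function.update g ⟨j, hj⟩ (!g ⟨j, hj⟩)) i
      = -(-1 : ℂ) ^ signCount a b g i := by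
  have key := signCount_update_true_of_lt g hj h
  cases hv : g ⟨j, hj⟩
  · rw [← hv, Function.update_eq_self] at key
    rw [Bool.not_false, key, pow_succ, mul_neg_one]
  · rw [← hv, Function.update_eq_self] at key
    rw [Bool.not_true, key, pow_succ, mul_neg_one, neg_neg]

theorem fermionOp_mul_self (i : ℤ) (t : Bool) : fermionOp a b i t * fermionOp a b i t = 0 := by
  by_cases hi : i ∈ Finset.Icc a b
  · ext ψ g
    rw [Module.End.mul_apply, fermionOp_apply_of_mem hi]
    split_ifs with hg
    · rw [fermionOp_apply_of_mem hi, if_neg (by simp)]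
      simp
    · rfl
  · rw [fermionOp_of_notMem hi, zero_mul]

theorem fermionOp_anticomm_of_lt {i j : ℤ} (hij : i < j) (t s : Bool) :
    fermionOp a b i t * fermionOp a b j s = -(fermionOp a b j s * fermionOp a b i t) := by
  by_cases hi : i ∈ Finset.Icc a b
  swap
  · simp [fermionOp_of_notMem hi]
  by_cases hj : j ∈ Finset.Icc a b
  swap
  · simp [fermionOp_of_notMem hj]
  have hne : (⟨i, hi⟩ : {x : ℤ // x ∈ Finset.Icc a b}) ≠ ⟨j, hj⟩ := by
    simp only [ne_eq, Subtype.mk.injEq]; omega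
  ext ψ g
  simp only [Module.End.mul_apply, LinearMap.neg_apply, PiLp.neg_apply,
    fermionOp_apply_of_mem hi, fermionOp_apply_of_mem hj,
    Function.update_of_ne hne, Function.update_of_ne hne.symm]
  by_cases hgi : g ⟨i, hi⟩ = t
  swap
  · simp [hgi]
  by_cases hgj : g ⟨j, hj⟩ = s
  swap
  · simp [hgj]
  have hsign := neg_one_pow_signCount_update_not_of_lt g hi hij
  rw [hgi] at hsign
  simp only [if_pos hgi, if_pos hgj]
  rw [Function.update_comm hne.symm, signCount_update_of_le g hj hij.le, hsign]
  ring

theorem fermionOp_anticomm {i j : ℤ} (hij : i ≠ j) (t s : Bool) :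
    fermionOp a b i t * fermionOp a b j s = -(fermionOp a b j s * fermionOp a b i t) := by
  rcases hij.lt_or_gt with h | h
  · exact fermionOp_anticomm_of_lt h t s
  · rw [fermionOp_anticomm_of_lt h s t, neg_neg]

theorem isFermionic_fermionOp : IsFermionic (fermionOp a b) :=
  ⟨fermionOp_mul_self, fun _ _ hij => fermionOp_anticomm hij⟩

theorem star_fermionOp (i : ℤ) (t : Bool) : star (fermionOp a b i t) = fermionOp a b i (!t) := by
  rw [LinearMap.star_eq_adjoint, eq_comm, LinearMap.eq_adjoint_iff]
  intro x y
  by_cases hi : i ∈ Finset.Icc a b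
  swap
  · simp [fermionOp_of_notMem hi]
  have flip :
      Function.Involutive fun g : Config a b => Function.update g ⟨i, hi⟩ (!g ⟨i, hi⟩) :=
    fun g => by
      funext x
      by_cases hx : x = ⟨i, hi⟩
      · subst hx; simp
      · simp [hx]
  simp only [PiLp.inner_apply, RCLike.inner_apply]
  rw [← Equiv.sum_comp flip.toPerm]
  refine Finset.sum_congr rfl fun g _ => ?_
  simp only [Function.Involutive.coe_toPerm, fermionOp_apply_of_mem hi, Function.update_self,
    Function.update_idem, signCount_update_of_le g hi le_rfl]
  by_cases hg : g ⟨i, hi⟩ = t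
  · subst hg
    simp only [Bool.not_not, Function.update_eq_self, if_true, map_mul, map_pow, map_neg, map_one]
    ring
  · simp [hg]

theorem star_monomial_fermionOp (L : List (ℤ × Bool)) :
    star (monomial (fermionOp a b) L)
      = monomial (fermionOp a b) (L.reverse.map fun x => (x.1, !x.2)) := by
  induction L with
  | nil => simp
  | cons x L ih => simp [ih, star_fermionOp]

theorem zeta_eq_fermionOp {i v : ℤ} (hv : v = 1 ∨ v = -1) :
    zeta a b i v = fermionOp a b i (decide (v = 1)) := by
  rcases hv with rfl | rfl <;> simp [zeta, fermionOp]

end FermionOp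

def chargeList (k l : ℤ) (f : ℤ → ℤ) : List (ℤ × Bool) :=
  (List.range (2 * l - 2 * k + 1).toNat).map fun j : ℕ =>
    (2 * k + (j : ℤ), decide (f (2 * k + (j : ℤ)) = 1))

section ChargeList

variable {k l : ℤ} {f : ℤ → ℤ}

theorem mem_chargeList {x : ℤ × Bool} :
    x ∈ chargeList k l f ↔ 2 * k ≤ x.1 ∧ x.1 ≤ 2 * l ∧ x.2 = decide (f x.1 = 1) := by
  constructor
  · intro hx
    obtain ⟨j, hj, rfl⟩ := List.mem_map.1 hx
    rw [List.mem_range] at hj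
    exact ⟨by omega, by omega, rfl⟩
  · rintro ⟨h₁, h₂, h₃⟩
    have hx : 2 * k + ((x.1 - 2 * k).toNat : ℤ) = x.1 := by omega
    refine List.mem_map.2 ⟨(x.1 - 2 * k).toNat, List.mem_range.2 (by omega), ?_⟩
    rw [hx, ← h₃]

theorem nodup_map_fst_chargeList : ((chargeList k l f).map Prod.fst).Nodup := by
  rw [chargeList, List.map_map]
  exact List.nodup_range.map fun i j h => by simpa using h

theorem odd_length_chargeList (hkl : k ≤ l) : Odd (chargeList k l f).length := by
  rw [chargeList, List.length_map, List.length_range, Nat.odd_iff]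
  omega

theorem QF_eq_monomial {a b : ℤ}
    (hf : ∀ i ∈ Finset.Icc (2 * k) (2 * l), f i = 1 ∨ f i = -1) :
    QF a b k l f = monomial (fermionOp a b) (chargeList k l f) := by
  -- `QF` casts `List.range _` to a list of integers through the list monad.
  simp only [QF, monomial, chargeList, List.pure_def, List.bind_eq_flatMap, ← List.map_eq_flatMap,
    List.map_map]
  refine congrArg List.prod (List.map_congr_left fun j hj => ?_)
  rw [List.mem_range] at hj
  exact zeta_eq_fermionOp (hf _ (Finset.mem_Icc.2 ⟨by omega, by omega⟩))

end ChargeList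

def qTerm (i : ℤ) (u : Bool) : List (ℤ × Bool) :=
  [(2 * i + 1, u), (2 * i, !u), (2 * i - 1, u)]

theorem nodup_map_fst_qTerm (i : ℤ) (u : Bool) : ((qTerm i u).map Prod.fst).Nodup := by
  simp only [qTerm, List.map_cons, List.map_nil, List.nodup_cons, List.mem_cons, List.not_mem_nil,
    List.nodup_nil, or_false, not_or, not_false_eq_true, and_true]
  omega

theorem qOp_eq_monomial {a b : ℤ} (i : ℤ) :
    qOp a b i = monomial (fermionOp a b) (qTerm i false) := by
  simp [qOp, qTerm, fermionOp, mul_assoc]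

theorem star_qOp {a b : ℤ} (i : ℤ) :
    star (qOp a b i) = monomial (fermionOp a b) (qTerm i true).reverse := by
  rw [qOp_eq_monomial, star_monomial_fermionOp]
  simp [qTerm]

theorem memXi.exists_mem_qTerm_mem_chargeList {k l : ℤ} {f : ℤ → ℤ} (hf : memXi k l f)
    (hkl : k < l) {i : ℤ} (hki : k ≤ i) (hil : i ≤ l) (u : Bool) :
    ∃ x ∈ qTerm i u, x ∈ chargeList k l f := by
  obtain ⟨hpm, hnf, hleft, hright⟩ := hf
  simp only [qTerm, List.mem_cons, List.not_mem_nil, or_false, exists_eq_or_imp, exists_eq_left,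
    mem_chargeList]
  by_cases hmid : (!u) = decide (f (2 * i) = 1)
  · exact Or.inr (Or.inl ⟨by omega, by omega, hmid⟩)
  have hu : u = decide (f (2 * i) = 1) := by simpa using hmid
  rcases hki.eq_or_lt with rfl | hki
  · exact Or.inl ⟨by omega, by omega, by rw [← hleft]; exact hu⟩
  rcases hil.eq_or_lt with rfl | hil
  · exact Or.inr (Or.inr ⟨by omega, by omega, by rw [hright]; exact hu⟩)
  by_cases hp' : u = decide (f (2 * i + 1) = 1)
  · exact Or.inl ⟨by omega, by omega, hp'⟩
  refine Or.inr (Or.inr ⟨by omega, by omega, ?_⟩)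
  -- otherwise the signs of `f` at `2i - 1, 2i, 2i + 1` alternate: a forbidden triplet
  by_contra hm'
  have hm := hpm (2 * i - 1) (Finset.mem_Icc.2 ⟨by omega, by omega⟩)
  have h0 := hpm (2 * i) (Finset.mem_Icc.2 ⟨by omega, by omega⟩)
  have hp := hpm (2 * i + 1) (Finset.mem_Icc.2 ⟨by omega, by omega⟩)
  have := hnf i hki hil
  rcases hm with hm | hm <;> rcases h0 with h0 | h0 <;> rcases hp with hp | hp <;> simp_all

theorem monomial_anticomm_QF_of_perm_qTerm {a b k l : ℤ} {f : ℤ → ℤ} (hf : memXi k l f)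
    (hkl : k < l) {L : List (ℤ × Bool)} {i : ℤ} {u : Bool} (hL : L.Perm (qTerm i u)) :
    monomial (fermionOp a b) L * QF a b k l f = -(QF a b k l f * monomial (fermionOp a b) L) := by
  rw [QF_eq_monomial hf.1]
  by_cases hi : k ≤ i ∧ i ≤ l
  · obtain ⟨x, hx, hx'⟩ := hf.exists_mem_qTerm_mem_chargeList hkl hi.1 hi.2 u
    have hnodup : (L.map Prod.fst).Nodup := (hL.map _).nodup_iff.2 (nodup_map_fst_qTerm i u)
    have hxL := hL.mem_iff.2 hx
    rw [isFermionic_fermionOp.monomial_mul_monomial_eq_zero hnodup nodup_map_fst_chargeList hxL hx',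
      isFermionic_fermionOp.monomial_mul_monomial_eq_zero nodup_map_fst_chargeList hnodup hx' hxL,
      neg_zero]
  · refine isFermionic_fermionOp.monomial_anticomm_of_odd (fun x hx => ?_)
      ⟨1, by simp [hL.length_eq, qTerm]⟩ (odd_length_chargeList hkl.le)
    have hx := hL.mem_iff.1 hx
    simp only [qTerm, List.mem_cons, List.not_mem_nil, or_false] at hx
    simp only [List.mem_map, mem_chargeList, not_exists, not_and]
    rintro y ⟨h₁, h₂, -⟩ hy
    rcases hx with rfl | rfl | rfl <;> simp only at hy <;> omega

theorem nicolai_hidden_local_fermion_symmetries_general (a b p q : ℤ)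
    (k l : ℤ) (hkl : k < l)
    (f : ℤ → ℤ) (hf : memXi k l f) :
    (QNic a b p q * LinearMap.adjoint (QNic a b p q)
        + LinearMap.adjoint (QNic a b p q) * QNic a b p q) * QF a b k l f
      = QF a b k l f *
        (QNic a b p q * LinearMap.adjoint (QNic a b p q)
          + LinearMap.adjoint (QNic a b p q) * QNic a b p q) ∧
    (QNic a b p q * LinearMap.adjoint (QNic a b p q)
        + LinearMap.adjoint (QNic a b p q) * QNic a b p q)
        * LinearMap.adjoint (QF a b k l f)
      = LinearMap.adjoint (QF a b k l f) *
        (QNic a b p q * LinearMap.adjoint (QNic a b p q)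
          + LinearMap.adjoint (QNic a b p q) * QNic a b p q) := by
  simp only [← LinearMap.star_eq_adjoint]
  have hQ : QNic a b p q * QF a b k l f = -(QF a b k l f * QNic a b p q) := by
    rw [QNic, Finset.sum_mul, Finset.mul_sum, ← Finset.sum_neg_distrib]
    refine Finset.sum_congr rfl fun i _ => ?_
    rw [qOp_eq_monomial]
    exact monomial_anticomm_QF_of_perm_qTerm hf hkl (List.Perm.refl _)
  have hQstar : star (QNic a b p q) * QF a b k l f = -(QF a b k l f * star (QNic a b p q)) := by
    rw [QNic, star_sum, Finset.sum_mul, Finset.mul_sum, ← Finset.sum_neg_distrib]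
    refine Finset.sum_congr rfl fun i _ => ?_
    rw [star_qOp]
    exact monomial_anticomm_QF_of_perm_qTerm hf hkl (List.reverse_perm _)
  refine ⟨(commute_mul_add_mul_of_anticomm hQ hQstar).eq, ?_⟩
  refine (commute_mul_add_mul_of_anticomm ?_ ?_).eq
  · exact anticomm_star_of_anticomm_star hQstar
  · exact anticomm_star_of_anticomm_star (by rwa [star_star])

/-- the Nicolai Hamiltonian `H = Q Q* + Q* Q` commutes with every hidden
local fermion operator `Q(f)`, `f ∈ Ξ̂_{k,l}`, and with its adjoint. -/
theorem nicolai_hidden_local_fermion_symmetries (a b p q : ℤ) (hpq : p ≤ q)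
    (hS : Finset.Icc (2 * p - 1) (2 * q + 1) ⊆ Finset.Icc a b)
    (k l : ℤ) (hpk : p ≤ k) (hkl : k < l) (hlq : l ≤ q)
    (f : ℤ → ℤ) (hf : memXi k l f) :
    (QNic a b p q * LinearMap.adjoint (QNic a b p q)
        + LinearMap.adjoint (QNic a b p q) * QNic a b p q) * QF a b k l f
      = QF a b k l f *
        (QNic a b p q * LinearMap.adjoint (QNic a b p q)
          + LinearMap.adjoint (QNic a b p q) * QNic a b p q) ∧
    (QNic a b p q * LinearMap.adjoint (QNic a b p q)
        + LinearMap.adjoint (QNic a b p q) * QNic a b p q)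
        * LinearMap.adjoint (QF a b k l f)
      = LinearMap.adjoint (QF a b k l f) *
        (QNic a b p q * LinearMap.adjoint (QNic a b p q)
          + LinearMap.adjoint (QNic a b p q) * QNic a b p q) :=
  nicolai_hidden_local_fermion_symmetries_general a b p q k l hkl f hf

end Nicolai
end

section
/- Let S be a finite interval of integers, let k < l be integers with {2k−1, 2k, …, 2l+1} ⊆ S, and let f ∈ Ξ̂_{k,l}. Then for every integer i with k ≤ i ≤ l, all of the following products are the zero operator on ℋ_S: Q(f) q_{2i} = 0, q_{2i} Q(f) = 0, Q(f) q_{2i}* = 0, and q_{2i}* Q(f) = 0, where q_{2i} = c_{2i+1} c*_{2i} c_{2i−1}. -/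
/-
Q(f), q_{2i} and q_{2i}* are products of Jordan–Wigner operators at pairwise distinct sites.
Operators at distinct sites anticommute and each of them squares to zero, so two such
products multiply to zero as soon as they share a factor: commute one copy of it next to the
other. The constraints defining Ξ̂_{k,l} (no forbidden triplet at the interior even sites,
equal signs on the two boundary edges) force Q(f) to share a factor with q_{2i}, and likewise
with q_{2i}*, whose factors are those of q_{2i} with c and c* exchanged.
-/

namespace Nicolai

variable {a b : ℤ}

theorem mul_list_prod_mul_self_eq_zero {R : Type*} [Ring R] {T : R} (hT : T * T = 0) :
    ∀ {L : List R}, (∀ A ∈ L, T * A = -(A * T)) → T * L.prod * T = 0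
  | [], _ => by simpa using hT
  | A :: L, h => by
    have hL := mul_list_prod_mul_self_eq_zero hT fun B hB => h B (List.mem_cons_of_mem A hB)
    calc T * (A :: L).prod * T = T * A * (L.prod * T) := by simp only [List.prod_cons, mul_assoc]
      _ = -(A * (T * L.prod * T)) := by rw [h A List.mem_cons_self]; noncomm_ring
      _ = 0 := by rw [hL, mul_zero, neg_zero]

theorem neg_one_pow_signCount_eq_prod (g : Config a b) (m : ℤ) :
    (-1 : ℂ) ^ signCount a b g m = ∏ x, if x.1 < m ∧ g x = true then -1 else 1 := by
  rw [Finset.prod_ite, Finset.prod_const, Finset.prod_const_one, mul_one]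
  rfl

theorem neg_one_pow_signCount_update_not (g : Config a b) (p : {x : ℤ // x ∈ Finset.Icc a b})
    (m : ℤ) :
    (-1 : ℂ) ^ signCount a b (Function.update g p (!g p)) m
      = (if p.1 < m then -1 else 1) * (-1) ^ signCount a b g m := by
  classical
  simp only [neg_one_pow_signCount_eq_prod, Fintype.prod_eq_mul_prod_compl p,
    Function.update_self]
  have hrest : ∀ x ∈ ({p}ᶜ : Finset _), Function.update g p (!g p) x = g x := fun x hx =>
    Function.update_of_ne (by simpa using hx) _ _
  rw [Finset.prod_congr rfl fun x hx => by rw [hrest x hx]]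
  cases g p <;> by_cases hp : p.1 < m <;> simp [hp]

theorem signCount_update_self (g : Config a b) {i : ℤ} (hi : i ∈ Finset.Icc a b) (v : Bool) :
    signCount a b (Function.update g ⟨i, hi⟩ v) i = signCount a b g i := by
  unfold signCount
  congr 1
  refine Finset.filter_congr fun x _ => and_congr_right fun hx => ?_
  rw [Function.update_of_ne (by rintro rfl; exact lt_irrefl _ hx)]

noncomputable def cOp (a b : ℤ) (t : Bool) (i : ℤ) : Module.End ℂ (Hs a b) :=
  bif t then cCr a b i else cAnn a b i

theorem cOp_apply_of_mem {i : ℤ} (hi : i ∈ Finset.Icc a b) (t : Bool) (ψ : Hs a b)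
    (g : Config a b) :
    cOp a b t i ψ g = if g ⟨i, hi⟩ = t then
      (-1) ^ signCount a b g i * ψ (Function.update g ⟨i, hi⟩ (!t)) else 0 := by
  cases t <;> simp [cOp, cAnn, cCr, hi]

theorem cOp_of_notMem {i : ℤ} (hi : i ∉ Finset.Icc a b) (t : Bool) : cOp a b t i = 0 := by
  cases t <;> ext ψ g <;> simp [cOp, cAnn, cCr, hi]

theorem cOp_mul_self (t : Bool) (i : ℤ) : cOp a b t i * cOp a b t i = 0 := by
  by_cases hi : i ∈ Finset.Icc a b
  · ext ψ g
    simp only [Module.End.mul_apply, cOp_apply_of_mem hi, Function.update_self]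
    split_ifs <;> simp_all
  · simp [cOp_of_notMem hi]

theorem cOp_mul_cOp_of_ne (t₁ t₂ : Bool) {j m : ℤ} (hjm : j ≠ m) :
    cOp a b t₁ j * cOp a b t₂ m = -(cOp a b t₂ m * cOp a b t₁ j) := by
  by_cases hj : j ∈ Finset.Icc a b
  swap; · simp [cOp_of_notMem hj]
  by_cases hm : m ∈ Finset.Icc a b
  swap; · simp [cOp_of_notMem hm]
  have hne : (⟨j, hj⟩ : {x : ℤ // x ∈ Finset.Icc a b}) ≠ ⟨m, hm⟩ := by simpa using hjm
  ext ψ g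
  simp only [Module.End.mul_apply, LinearMap.neg_apply, PiLp.neg_apply, cOp_apply_of_mem hj,
    cOp_apply_of_mem hm, Function.update_of_ne hne, Function.update_of_ne hne.symm]
  split_ifs with h₁ h₂ <;> try simp
  subst h₁ h₂
  rw [neg_one_pow_signCount_update_not, neg_one_pow_signCount_update_not,
    Function.update_comm hne]
  rcases hjm.lt_or_gt with h | h <;> simp [h, h.not_gt] <;> ring

theorem adjoint_cOp (t : Bool) (i : ℤ) : LinearMap.adjoint (cOp a b t i) = cOp a b (!t) i := by
  by_cases hi : i ∈ Finset.Icc a b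
  swap; · simp [cOp_of_notMem hi]
  have hflip : Function.Involutive
      fun g : Config a b => Function.update g ⟨i, hi⟩ (!g ⟨i, hi⟩) := fun g => by simp
  symm
  rw [LinearMap.eq_adjoint_iff]
  intro x y
  simp only [PiLp.inner_apply, RCLike.inner_apply, cOp_apply_of_mem hi]
  rw [← Equiv.sum_comp (hflip.toPerm _)]
  refine Fintype.sum_congr _ _ fun g => ?_
  simp only [Function.Involutive.coe_toPerm, Function.update_self, Function.update_idem,
    signCount_update_self, Bool.not_not]
  cases hg : g ⟨i, hi⟩ <;> cases t <;> simp [← hg, mul_comm, mul_left_comm, mul_assoc]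

theorem zeta_eq_zero_or_cOp (i v : ℤ) : zeta a b i v = 0 ∨ ∃ t, zeta a b i v = cOp a b t i := by
  unfold zeta
  split_ifs
  exacts [Or.inr ⟨true, rfl⟩, Or.inr ⟨false, rfl⟩, Or.inl rfl]

theorem zeta_mul_self (i v : ℤ) : zeta a b i v * zeta a b i v = 0 := by
  obtain h | ⟨t, h⟩ := zeta_eq_zero_or_cOp (a := a) (b := b) i v <;> rw [h]
  exacts [zero_mul 0, cOp_mul_self t i]

theorem zeta_mul_zeta_of_ne {j m : ℤ} (hjm : j ≠ m) (v w : ℤ) :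
    zeta a b j v * zeta a b m w = -(zeta a b m w * zeta a b j v) := by
  obtain h₁ | ⟨t₁, h₁⟩ := zeta_eq_zero_or_cOp (a := a) (b := b) j v <;>
    obtain h₂ | ⟨t₂, h₂⟩ := zeta_eq_zero_or_cOp (a := a) (b := b) m w <;>
    simp only [h₁, h₂, zero_mul, mul_zero, neg_zero]
  exact cOp_mul_cOp_of_ne t₁ t₂ hjm

theorem adjoint_zeta (i v : ℤ) : LinearMap.adjoint (zeta a b i v) = zeta a b i (-v) := by
  unfold zeta
  split_ifs <;> try omega
  exacts [adjoint_cOp true i, adjoint_cOp false i, map_zero _]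

noncomputable def zetaProd (a b : ℤ) (w : List (ℤ × ℤ)) : Module.End ℂ (Hs a b) :=
  (w.map fun p => zeta a b p.1 p.2).prod

@[simp] theorem zetaProd_nil : zetaProd a b [] = 1 := rfl

@[simp] theorem zetaProd_cons (p : ℤ × ℤ) (w : List (ℤ × ℤ)) :
    zetaProd a b (p :: w) = zeta a b p.1 p.2 * zetaProd a b w := rfl

@[simp] theorem zetaProd_append (w₁ w₂ : List (ℤ × ℤ)) :
    zetaProd a b (w₁ ++ w₂) = zetaProd a b w₁ * zetaProd a b w₂ := by
  simp [zetaProd]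

theorem adjoint_zetaProd (w : List (ℤ × ℤ)) :
    LinearMap.adjoint (zetaProd a b w) = zetaProd a b (w.map fun p => (p.1, -p.2)).reverse := by
  induction w with
  | nil => exact LinearMap.adjoint_id
  | cons p w ih =>
    rw [zetaProd_cons, ← LinearMap.star_eq_adjoint, star_mul, LinearMap.star_eq_adjoint, ih,
      LinearMap.star_eq_adjoint, adjoint_zeta]
    simp

theorem zetaProd_eq_zero_of_repeat (u m r : List (ℤ × ℤ)) (p : ℤ × ℤ)
    (hm : ∀ q ∈ m, q.1 ≠ p.1) :
    zetaProd a b (u ++ p :: (m ++ p :: r)) = 0 := by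
  have hanti : ∀ A ∈ m.map fun q => zeta a b q.1 q.2,
      zeta a b p.1 p.2 * A = -(A * zeta a b p.1 p.2) := by
    simp only [List.mem_map]
    rintro _ ⟨q, hq, rfl⟩
    exact zeta_mul_zeta_of_ne (hm q hq).symm _ _
  have hT : zeta a b p.1 p.2 * zetaProd a b m * zeta a b p.1 p.2 = 0 :=
    mul_list_prod_mul_self_eq_zero (zeta_mul_self p.1 p.2) hanti
  calc zetaProd a b (u ++ p :: (m ++ p :: r))
      = zetaProd a b u * (zeta a b p.1 p.2 * zetaProd a b m * zeta a b p.1 p.2) *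
          zetaProd a b r := by
        simp only [zetaProd_append, zetaProd_cons, mul_assoc]
    _ = 0 := by rw [hT, mul_zero, zero_mul]

theorem zetaProd_mul_zetaProd_eq_zero {w₁ w₂ : List (ℤ × ℤ)}
    (h₁ : (w₁.map Prod.fst).Nodup) (h₂ : (w₂.map Prod.fst).Nodup) {p : ℤ × ℤ} (hp₁ : p ∈ w₁) (hp₂ : p ∈ w₂) :
    zetaProd a b w₁ * zetaProd a b w₂ = 0 := by
  obtain ⟨u, r, rfl⟩ := List.append_of_mem hp₁
  obtain ⟨m, r', rfl⟩ := List.append_of_mem hp₂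
  have hr : ∀ q ∈ r, q.1 ≠ p.1 := fun q hq hqp => by
    simp only [List.map_append, List.map_cons, List.nodup_append, List.nodup_cons] at h₁
    exact h₁.2.1.1 (hqp ▸ List.mem_map_of_mem hq)
  have hm : ∀ q ∈ m, q.1 ≠ p.1 := fun q hq => by
    simp only [List.map_append, List.map_cons, List.nodup_append] at h₂
    exact h₂.2.2 _ (List.mem_map_of_mem hq) _ List.mem_cons_self
  rw [← zetaProd_append, List.append_assoc, List.cons_append, ← List.append_assoc r]
  exact zetaProd_eq_zero_of_repeat u (r ++ m) r' p fun q hq =>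
    (List.mem_append.mp hq).elim (hr q) (hm q)

def chargeWord (k l : ℤ) (f : ℤ → ℤ) : List (ℤ × ℤ) :=
  (List.range (2 * l - 2 * k + 1).toNat).map fun j : ℕ => (2 * k + j, f (2 * k + j))

theorem QF_eq_zetaProd (k l : ℤ) (f : ℤ → ℤ) :
    QF a b k l f = zetaProd a b (chargeWord k l f) := by
  -- `QF` runs over `List.range _` coerced to a `List ℤ`, which is a `flatMap`
  simp [QF, zetaProd, chargeWord, ← List.map_eq_flatMap, Function.comp_def]

theorem nodup_chargeWord (k l : ℤ) (f : ℤ → ℤ) : ((chargeWord k l f).map Prod.fst).Nodup := by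
  rw [chargeWord, List.map_map]
  exact List.nodup_range.map fun x y h => by simpa using h

theorem mem_chargeWord {k l s : ℤ} (f : ℤ → ℤ) (h₁ : 2 * k ≤ s) (h₂ : s ≤ 2 * l) :
    (s, f s) ∈ chargeWord k l f := by
  simp only [chargeWord, List.mem_map, List.mem_range]
  exact ⟨(s - 2 * k).toNat, by omega,
    by rw [show 2 * k + ((s - 2 * k).toNat : ℤ) = s by omega]⟩

def qWord (i v : ℤ) : List (ℤ × ℤ) := [(2 * i + 1, -v), (2 * i, v), (2 * i - 1, -v)]

theorem qOp_eq_zetaProd (i : ℤ) : qOp a b i = zetaProd a b (qWord i 1) := by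
  simp [qOp, qWord, zeta, mul_assoc]

theorem adjoint_qOp_eq_zetaProd (i : ℤ) :
    LinearMap.adjoint (qOp a b i) = zetaProd a b (qWord i (-1)).reverse := by
  rw [qOp_eq_zetaProd, adjoint_zetaProd]
  simp [qWord]

theorem nodup_qWord (i v : ℤ) : ((qWord i v).map Prod.fst).Nodup := by
  simp [qWord]
  omega

theorem memXi.exists_mem_qWord {k l i v : ℤ} {f : ℤ → ℤ} (hf : memXi k l f) (hkl : k < l)
    (hki : k ≤ i) (hil : i ≤ l) (hv : v = 1 ∨ v = -1) :
    ∃ s, 2 * k ≤ s ∧ s ≤ 2 * l ∧ (s, f s) ∈ qWord i v := by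
  obtain ⟨hsign, hinterior, hleft, hright⟩ := hf
  have hpm := fun s hs₁ hs₂ => hsign s (Finset.mem_Icc.mpr ⟨hs₁, hs₂⟩)
  simp only [qWord, List.mem_cons, Prod.mk.injEq, List.not_mem_nil, or_false]
  have hmid := hpm (2 * i) (by omega) (by omega)
  rcases hki.lt_or_eq with hki | rfl
  · rcases hil.lt_or_eq with hil | rfl
    · have hnot := hinterior i hki hil
      have hsucc := hpm (2 * i + 1) (by omega) (by omega)
      have hpred := hpm (2 * i - 1) (by omega) (by omega)
      grind
    · grind
  · grind

theorem local_charge_annihilates_q_general (a b k l : ℤ) (hkl : k < l)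
    (f : ℤ → ℤ) (hf : memXi k l f) (i : ℤ) (hki : k ≤ i) (hil : i ≤ l) :
    QF a b k l f * qOp a b i = 0 ∧
    qOp a b i * QF a b k l f = 0 ∧
    QF a b k l f * LinearMap.adjoint (qOp a b i) = 0 ∧
    LinearMap.adjoint (qOp a b i) * QF a b k l f = 0 := by
  have hQ := nodup_chargeWord k l f
  have hq := nodup_qWord i 1
  have hq' : ((qWord i (-1)).reverse.map Prod.fst).Nodup := by
    rw [List.map_reverse, List.nodup_reverse]
    exact nodup_qWord i (-1)
  obtain ⟨s, hs₁, hs₂, hs⟩ := hf.exists_mem_qWord hkl hki hil (Or.inl rfl)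
  obtain ⟨s', hs₁', hs₂', hs'⟩ := hf.exists_mem_qWord hkl hki hil (Or.inr rfl)
  have hsQ := mem_chargeWord f hs₁ hs₂
  have hs'Q := mem_chargeWord f hs₁' hs₂'
  have hs'r := List.mem_reverse.mpr hs'
  rw [adjoint_qOp_eq_zetaProd, QF_eq_zetaProd, qOp_eq_zetaProd]
  exact ⟨zetaProd_mul_zetaProd_eq_zero hQ hq hsQ hs,
    zetaProd_mul_zetaProd_eq_zero hq hQ hs hsQ,
    zetaProd_mul_zetaProd_eq_zero hQ hq' hs'Q hs'r,
    zetaProd_mul_zetaProd_eq_zero hq' hQ hs'r hs'Q⟩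

/-- for `f ∈ Ξ̂_{k,l}` and `k ≤ i ≤ l`, all products of `Q(f)` (or its
adjoint) with `q_{2i}` (or its adjoint) vanish. -/
theorem local_charge_annihilates_q (a b k l : ℤ) (hkl : k < l)
    (hS : Finset.Icc (2 * k - 1) (2 * l + 1) ⊆ Finset.Icc a b)
    (f : ℤ → ℤ) (hf : memXi k l f) (i : ℤ) (hki : k ≤ i) (hil : i ≤ l) :
    QF a b k l f * qOp a b i = 0 ∧
    qOp a b i * QF a b k l f = 0 ∧
    QF a b k l f * LinearMap.adjoint (qOp a b i) = 0 ∧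
    LinearMap.adjoint (qOp a b i) * QF a b k l f = 0 :=
  local_charge_annihilates_q_general a b k l hkl f hf i hki hil

end Nicolai
end

section
/- Let k ≤ l be integers, let S = {2k−1, 2k, …, 2l+1}, and let Q = Q[k,l] be the Nicolai supercharge on ℋ_S. For every configuration g : S → Bool, the basis vector e_g satisfies Q e_g = 0 and Q* e_g = 0 if and only if g has no forbidden triplet at any even site 2i with k ≤ i ≤ l. (A classical state is supersymmetric for the Nicolai model exactly when its configuration contains no forbidden triplet.) -/
/-! Read as a matrix, `q_{2i}` has a nonzero entry `⟨e_h, q_{2i} e_g⟩` exactly when `g` carries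
the triple (occupied, empty, occupied) at `2i` and `h` is `g` with that triple flipped. Different
`i` flip different sites `2i`, so the summands of `Q e_g` never cancel and `Q e_g = 0` iff `g`
has no such triple. Since `⟨e_h, Q* e_g⟩` is the conjugate of `⟨e_g, Q e_h⟩`, the same count
shows that `Q* e_g = 0` iff `g` has no triple (empty, occupied, empty). -/

namespace Nicolai

lemma adjoint_apply_single_apply {𝕜 ι : Type*} [RCLike 𝕜] [Fintype ι] [DecidableEq ι]
    (A : EuclideanSpace 𝕜 ι →ₗ[𝕜] EuclideanSpace 𝕜 ι) (i j : ι) :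
    LinearMap.adjoint A (EuclideanSpace.single i 1) j =
      starRingEnd 𝕜 (A (EuclideanSpace.single j 1) i) := by
  have hcoord : LinearMap.adjoint A (EuclideanSpace.single i 1) j =
      inner 𝕜 (EuclideanSpace.single j 1) (LinearMap.adjoint A (EuclideanSpace.single i 1)) := by
    simp [EuclideanSpace.inner_single_left]
  rw [hcoord, LinearMap.adjoint_inner_right, EuclideanSpace.inner_single_right]
  simp

def tripleAt (h : ℤ → Bool) (i : ℤ) : Bool × Bool × Bool :=
  (h (2 * i - 1), h (2 * i), h (2 * i + 1))

lemma forbiddenAt_iff_tripleAt (h : ℤ → Bool) (i : ℤ) :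
    forbiddenAt h i ↔
      tripleAt h i = (false, true, false) ∨ tripleAt h i = (true, false, true) := by
  simp [forbiddenAt, tripleAt]

section Interval

variable {a b : ℤ}

def flipTriple (i : ℤ) (h : Config a b) : Config a b :=
  fun j => if j.1 = 2 * i - 1 ∨ j.1 = 2 * i ∨ j.1 = 2 * i + 1 then !h j else h j

@[simp]
lemma flipTriple_flipTriple (i : ℤ) (h : Config a b) : flipTriple i (flipTriple i h) = h := by
  funext j
  unfold flipTriple
  split_ifs <;> simp

lemma flipTriple_left_injective {i j : ℤ} (hi : 2 * i ∈ Finset.Icc a b) (h : Config a b)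
    (hij : flipTriple i h = flipTriple j h) : i = j := by
  by_contra hne
  have := congrFun hij ⟨2 * i, hi⟩
  rw [flipTriple, flipTriple, if_pos (by simp), if_neg (by dsimp only; omega)] at this
  exact Bool.not_ne_self _ this

lemma tripleAt_ext_flipTriple {i : ℤ} (ha : a ≤ 2 * i - 1) (hb : 2 * i + 1 ≤ b)
    (h : Config a b) :
    tripleAt (ext a b (flipTriple i h)) i =
      (!ext a b h (2 * i - 1), !ext a b h (2 * i), !ext a b h (2 * i + 1)) := by
  have m1 : 2 * i - 1 ∈ Finset.Icc a b := Finset.mem_Icc.2 ⟨ha, by omega⟩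
  have m2 : 2 * i ∈ Finset.Icc a b := Finset.mem_Icc.2 ⟨by omega, by omega⟩
  have m3 : 2 * i + 1 ∈ Finset.Icc a b := Finset.mem_Icc.2 ⟨by omega, hb⟩
  simp [tripleAt, ext, flipTriple, m1, m2, m3]

lemma exists_flipTriple_eq_iff {i : ℤ} (ha : a ≤ 2 * i - 1) (hb : 2 * i + 1 ≤ b)
    (g : Config a b) :
    (∃ h, tripleAt (ext a b h) i = (false, true, false) ∧ flipTriple i h = g) ↔
      tripleAt (ext a b g) i = (true, false, true) := by
  constructor
  · rintro ⟨h, hh, rfl⟩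
    rw [tripleAt_ext_flipTriple ha hb]
    simp_all [tripleAt]
  · intro hg
    refine ⟨flipTriple i g, ?_, flipTriple_flipTriple i g⟩
    rw [tripleAt_ext_flipTriple ha hb]
    simp_all [tripleAt]

lemma update_triple_eq_flipTriple {i : ℤ} (m1 : 2 * i - 1 ∈ Finset.Icc a b)
    (m2 : 2 * i ∈ Finset.Icc a b) (m3 : 2 * i + 1 ∈ Finset.Icc a b) (h : Config a b)
    (h1 : h ⟨2 * i - 1, m1⟩ = false) (h2 : h ⟨2 * i, m2⟩ = true)
    (h3 : h ⟨2 * i + 1, m3⟩ = false) :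
    Function.update
        (Function.update (Function.update h ⟨2 * i + 1, m3⟩ true) ⟨2 * i, m2⟩ false)
        ⟨2 * i - 1, m1⟩ true = flipTriple i h := by
  funext ⟨x, hx⟩
  simp only [Function.update_apply, flipTriple, Subtype.mk.injEq]
  by_cases e1 : x = 2 * i - 1
  · subst e1; simp [h1]
  by_cases e2 : x = 2 * i
  · subst e2; simp [e1, h2]
  by_cases e3 : x = 2 * i + 1
  · subst e3; simp [h3]
  simp [e1, e2, e3]

lemma cAnn_apply_of_mem {j : ℤ} (hj : j ∈ Finset.Icc a b) (ψ : Hs a b) (h : Config a b) :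
    cAnn a b j ψ h = if h ⟨j, hj⟩ = false then
      (-1 : ℂ) ^ signCount a b h j * ψ (Function.update h ⟨j, hj⟩ true) else 0 :=
  dif_pos hj

lemma cCr_apply_of_mem {j : ℤ} (hj : j ∈ Finset.Icc a b) (ψ : Hs a b) (h : Config a b) :
    cCr a b j ψ h = if h ⟨j, hj⟩ = true then
      (-1 : ℂ) ^ signCount a b h j * ψ (Function.update h ⟨j, hj⟩ false) else 0 :=
  dif_pos hj

lemma qOp_e_apply_ne_zero_iff {i : ℤ} (ha : a ≤ 2 * i - 1) (hb : 2 * i + 1 ≤ b)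
    (g h : Config a b) :
    qOp a b i (e a b g) h ≠ 0 ↔
      tripleAt (ext a b h) i = (false, true, false) ∧ flipTriple i h = g := by
  have m1 : 2 * i - 1 ∈ Finset.Icc a b := Finset.mem_Icc.2 ⟨ha, by omega⟩
  have m2 : 2 * i ∈ Finset.Icc a b := Finset.mem_Icc.2 ⟨by omega, by omega⟩
  have m3 : 2 * i + 1 ∈ Finset.Icc a b := Finset.mem_Icc.2 ⟨by omega, hb⟩
  rw [qOp, Module.End.mul_apply, Module.End.mul_apply, cAnn_apply_of_mem m3,
    cCr_apply_of_mem m2, cAnn_apply_of_mem m1,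
    Function.update_of_ne (by simp), Function.update_of_ne (by simp),
    Function.update_of_ne (by simp only [ne_eq, Subtype.mk.injEq]; omega)]
  simp only [tripleAt, ext, m1, m2, m3, dite_true, Prod.mk.injEq]
  by_cases h3 : h ⟨2 * i + 1, m3⟩ = false
  · by_cases h2 : h ⟨2 * i, m2⟩ = true
    · by_cases h1 : h ⟨2 * i - 1, m1⟩ = false
      · simp [h1, h2, h3, update_triple_eq_flipTriple m1 m2 m3 h h1 h2 h3, e, PiLp.single_apply]
      · simp [h1]
    · simp [h2]
  · simp [h3]

variable {k l : ℤ}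

lemma QNic_apply (ψ : Hs a b) (h : Config a b) :
    QNic a b k l ψ h = ∑ i ∈ Finset.Icc k l, qOp a b i ψ h := by
  rw [QNic, LinearMap.sum_apply, WithLp.ofLp_sum, Finset.sum_apply]

lemma QNic_e_apply_ne_zero_iff (ha : a ≤ 2 * k - 1) (hb : 2 * l + 1 ≤ b) (g h : Config a b) :
    QNic a b k l (e a b g) h ≠ 0 ↔
      ∃ i ∈ Finset.Icc k l,
        tripleAt (ext a b h) i = (false, true, false) ∧ flipTriple i h = g := by
  have hq (i : ℤ) (hi : i ∈ Finset.Icc k l) := by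
    rw [Finset.mem_Icc] at hi
    exact qOp_e_apply_ne_zero_iff (i := i) (by omega) (by omega) g h
  rw [QNic_apply]
  constructor
  · intro hne
    obtain ⟨i, hi, hqi⟩ := Finset.exists_ne_zero_of_sum_ne_zero hne
    exact ⟨i, hi, (hq i hi).1 hqi⟩
  · rintro ⟨i, hi, hti, rfl⟩
    -- no cancellation: a nonzero summand `j` has `flipTriple j h = flipTriple i h`, forcing `j = i`
    rw [Finset.sum_eq_single_of_mem i hi]
    · exact (hq i hi).2 ⟨hti, rfl⟩
    · intro j hj hji
      by_contra hqj
      have hj' := Finset.mem_Icc.1 hj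
      exact hji (flipTriple_left_injective (Finset.mem_Icc.2 ⟨by omega, by omega⟩) h
        ((hq j hj).1 hqj).2)

lemma QNic_e_eq_zero_iff (ha : a ≤ 2 * k - 1) (hb : 2 * l + 1 ≤ b) (g : Config a b) :
    QNic a b k l (e a b g) = 0 ↔
      ∀ i ∈ Finset.Icc k l, tripleAt (ext a b g) i ≠ (true, false, true) := by
  calc QNic a b k l (e a b g) = 0 ↔ ∀ h, ¬ QNic a b k l (e a b g) h ≠ 0 := by
        simp [PiLp.ext_iff]
    _ ↔ ∀ i ∈ Finset.Icc k l,
        ¬ ∃ h, tripleAt (ext a b h) i = (false, true, false) ∧ flipTriple i h = g := by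
        simp only [QNic_e_apply_ne_zero_iff ha hb]
        grind
    _ ↔ _ := by
        refine forall₂_congr fun i hi => not_congr (exists_flipTriple_eq_iff ?_ ?_ g) <;>
          · rw [Finset.mem_Icc] at hi; omega

lemma adjoint_QNic_e_eq_zero_iff (ha : a ≤ 2 * k - 1) (hb : 2 * l + 1 ≤ b) (g : Config a b) :
    LinearMap.adjoint (QNic a b k l) (e a b g) = 0 ↔
      ∀ i ∈ Finset.Icc k l, tripleAt (ext a b g) i ≠ (false, true, false) := by
  calc LinearMap.adjoint (QNic a b k l) (e a b g) = 0 ↔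
        ∀ h, ¬ QNic a b k l (e a b h) g ≠ 0 := by
        simp [PiLp.ext_iff, e, adjoint_apply_single_apply]
    _ ↔ _ := by
        simp only [QNic_e_apply_ne_zero_iff ha hb]
        grind

end Interval

theorem classical_susy_iff_no_forbidden_triplet_general (k l : ℤ)
    (g : Config (2 * k - 1) (2 * l + 1)) :
    (QNic (2 * k - 1) (2 * l + 1) k l (e (2 * k - 1) (2 * l + 1) g) = 0 ∧
     LinearMap.adjoint (QNic (2 * k - 1) (2 * l + 1) k l)
       (e (2 * k - 1) (2 * l + 1) g) = 0)
    ↔ ∀ i : ℤ, k ≤ i → i ≤ l → ¬ forbiddenAt (ext (2 * k - 1) (2 * l + 1) g) i := by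
  rw [QNic_e_eq_zero_iff le_rfl le_rfl, adjoint_QNic_e_eq_zero_iff le_rfl le_rfl]
  simp only [forbiddenAt_iff_tripleAt, Finset.mem_Icc]
  grind

/-- a classical basis vector on `S = {2k−1, …, 2l+1}` is annihilated by
`Q[k,l]` and `Q[k,l]*` iff its configuration has no forbidden triplet at any even
site `2i` with `k ≤ i ≤ l`. -/
theorem classical_susy_iff_no_forbidden_triplet (k l : ℤ) (hkl : k ≤ l)
    (g : Config (2 * k - 1) (2 * l + 1)) :
    (QNic (2 * k - 1) (2 * l + 1) k l (e (2 * k - 1) (2 * l + 1) g) = 0 ∧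
     LinearMap.adjoint (QNic (2 * k - 1) (2 * l + 1) k l)
       (e (2 * k - 1) (2 * l + 1) g) = 0)
    ↔ ∀ i : ℤ, k ≤ i → i ≤ l → ¬ forbiddenAt (ext (2 * k - 1) (2 * l + 1) g) i :=
  classical_susy_iff_no_forbidden_triplet_general k l g

end Nicolai
end

section
/- For every natural number n ≥ 1 and every configuration g : {0, 1, …, 2n} → Bool belonging to Υ̂_{0,n}, g is reachable from the all-false configuration on {0, …, 2n} via Ξ̂(0,n). (Every classical open-edge supersymmetric state of the Nicolai model on I_{0,n} can be constructed by finitely many actions of broken local fermion charges upon the Fock vector.) -/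
/-! Complementing a configuration on the sites `2k, …, 2l` is the action of a single charge of
`Ξ̂_{k,l}` (the one that empties the occupied sites and fills the empty ones) as soon as the
configuration lies in `Υ̂_{k,l}`, and such a flip keeps `Υ̂_{0,n}` invariant. Flips are
involutions, so it suffices to empty the rightmost occupied site `s` by flips while keeping the
sites to its right empty: flip `[0, s]` if `s` is even; if `s` is odd, the sites `s + 1, s + 2,
s + 3` are empty, and flipping `[0, s + 3]` and then `[s + 1, s + 3]` complements exactly
`[0, s]`. -/

namespace Nicolai

def flipOn (k l : ℤ) (g : ℤ → Bool) : ℤ → Bool :=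
  fun i => if 2 * k ≤ i ∧ i ≤ 2 * l then !g i else g i

def flipCharge (g : ℤ → Bool) : ℤ → ℤ := fun i => if g i then -1 else 1

section Flip

variable {k l : ℤ} {g : ℤ → Bool}

lemma flipOn_of_mem {i : ℤ} (h : 2 * k ≤ i ∧ i ≤ 2 * l) : flipOn k l g i = !g i := if_pos h

lemma flipOn_of_not_mem {i : ℤ} (h : ¬(2 * k ≤ i ∧ i ≤ 2 * l)) : flipOn k l g i = g i :=
  if_neg h

@[simp]
lemma flipOn_flipOn : flipOn k l (flipOn k l g) = g := by
  funext i
  by_cases h : 2 * k ≤ i ∧ i ≤ 2 * l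
  · simp [flipOn_of_mem h]
  · simp [flipOn_of_not_mem h]

lemma flipOn_eq_flipOn_iff {i j : ℤ} (h : (2 * k ≤ i ∧ i ≤ 2 * l) ↔ (2 * k ≤ j ∧ j ≤ 2 * l)) :
    flipOn k l g i = flipOn k l g j ↔ g i = g j := by
  by_cases hi : 2 * k ≤ i ∧ i ≤ 2 * l
  · rw [flipOn_of_mem hi, flipOn_of_mem (h.1 hi), Bool.not_inj_iff]
  · rw [flipOn_of_not_mem hi, flipOn_of_not_mem (mt h.2 hi)]

lemma forbiddenAt_iff {i : ℤ} :
    forbiddenAt g i ↔ g (2 * i - 1) ≠ g (2 * i) ∧ g (2 * i) ≠ g (2 * i + 1) := by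
  unfold forbiddenAt
  cases g (2 * i - 1) <;> cases g (2 * i) <;> cases g (2 * i + 1) <;> simp

lemma forbiddenAt_flipOn_iff {i : ℤ} (hik : i ≠ k) (hil : i ≠ l) :
    forbiddenAt (flipOn k l g) i ↔ forbiddenAt g i := by
  simp only [forbiddenAt_iff, ne_eq]
  rw [flipOn_eq_flipOn_iff (by omega), flipOn_eq_flipOn_iff (by omega)]

lemma memUps_flipOn {p q : ℤ} (hpq : memUps p q g) (hkl : memUps k l g) (hpk : p ≤ k)
    (hk : k < l) (hlq : l ≤ q) : memUps p q (flipOn k l g) := by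
  obtain ⟨hint, hp, hq⟩ := hpq
  refine ⟨fun i hpi hiq => ?_, (flipOn_eq_flipOn_iff (by omega)).2 hp,
    (flipOn_eq_flipOn_iff (by omega)).2 hq⟩
  rw [forbiddenAt_iff]
  by_cases hik : i = k
  · subst hik
    exact fun h => h.2 ((flipOn_eq_flipOn_iff (by omega)).2 hkl.2.1)
  by_cases hil : i = l
  · subst hil
    exact fun h => h.1 ((flipOn_eq_flipOn_iff (by omega)).2 hkl.2.2)
  rw [← forbiddenAt_iff, forbiddenAt_flipOn_iff hik hil]
  exact hint i hpi hiq

lemma flipCharge_eq_one_iff {i : ℤ} : flipCharge g i = 1 ↔ g i = false := by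
  unfold flipCharge
  cases g i <;> simp

lemma flipCharge_eq_neg_one_iff {i : ℤ} : flipCharge g i = -1 ↔ g i = true := by
  unfold flipCharge
  cases g i <;> simp

lemma memXi_flipCharge (hg : memUps k l g) : memXi k l (flipCharge g) := by
  obtain ⟨hint, hk, hl⟩ := hg
  refine ⟨fun i _ => ?_, fun i hki hil => ?_, by simp only [flipCharge, hk],
    by simp only [flipCharge, hl]⟩
  · unfold flipCharge
    split <;> simp
  · simp only [flipCharge_eq_one_iff, flipCharge_eq_neg_one_iff]
    exact ⟨fun h => hint i hki hil (Or.inr h), fun h => hint i hki hil (Or.inl h)⟩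

lemma applicable_flipCharge : applicable k l (flipCharge g) g :=
  fun _ _ _ => ⟨flipCharge_eq_one_iff.1, flipCharge_eq_neg_one_iff.1⟩

lemma applyCharge_flipCharge : applyCharge k l (flipCharge g) g = flipOn k l g := by
  funext i
  unfold applyCharge flipOn
  split_ifs
  · cases h : g i <;> simp [flipCharge, h]
  · rfl

end Flip

namespace Reachable

variable {p q k l : ℤ} {g₀ g g' : ℤ → Bool}

lemma trans (h : Reachable p q g₀ g) (h' : Reachable p q g g') : Reachable p q g₀ g' := by
  induction h' with
  | refl => exact h
  | step k l f _ hpk hkl hlq hf happ ih => exact step k l f ih hpk hkl hlq hf happ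

lemma flipOn (hg : memUps k l g) (hpk : p ≤ k) (hkl : k < l) (hlq : l ≤ q) :
    Reachable p q g (flipOn k l g) := by
  rw [← applyCharge_flipCharge]
  exact step k l _ (refl g) hpk hkl hlq (memXi_flipCharge hg) applicable_flipCharge

lemma of_flipOn (hg : memUps k l g) (hpk : p ≤ k) (hkl : k < l) (hlq : l ≤ q) :
    Reachable p q (Nicolai.flipOn k l g) g := by
  simpa using Reachable.flipOn (memUps_flipOn hg hg le_rfl hkl le_rfl) hpk hkl hlq

end Reachable

section Descent

variable {n : ℤ} {g : ℤ → Bool}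

lemma exists_reachable_of_top_even {l : ℤ}
    (hsupp : ∀ i : ℤ, i ∉ Finset.Icc (0 : ℤ) (2 * n) → g i = false) (hg : memUps 0 n g)
    (htop : g (2 * l) = true) (habove : ∀ i, 2 * l < i → g i = false) :
    ∃ g', (∀ i : ℤ, i ∉ Finset.Icc (0 : ℤ) (2 * n) → g' i = false) ∧
      (∀ i, 2 * l ≤ i → g' i = false) ∧ memUps 0 n g' ∧ Reachable 0 n g' g := by
  have hl_mem : 2 * l ∈ Finset.Icc (0 : ℤ) (2 * n) := by
    by_contra h
    exact absurd (hsupp _ h) (by simp [htop])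
  rw [Finset.mem_Icc] at hl_mem
  have hln : l ≤ n := by omega
  have hl : 0 < l := by
    rcases (show 0 ≤ l by omega).eq_or_lt with rfl | hl
    · have h01 : g 0 = g 1 := by simpa using hg.2.1
      exact absurd (habove 1 (by omega)) (by simpa [← h01] using htop)
    · exact hl
  have hright : g (2 * l - 1) = g (2 * l) := by
    rcases hln.lt_or_eq with hlt | rfl
    · by_contra hne
      exact hg.1 l hl hlt (forbiddenAt_iff.2 ⟨hne, by simp [htop, habove (2 * l + 1) (by omega)]⟩)
    · exact hg.2.2
  have hgl : memUps 0 l g := ⟨fun i h0 hi => hg.1 i h0 (by omega), hg.2.1, hright⟩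
  refine ⟨flipOn 0 l g, fun i hi => ?_, fun i hi => ?_, memUps_flipOn hg hgl le_rfl hl hln,
    Reachable.of_flipOn hgl le_rfl hl hln⟩
  · rw [Finset.mem_Icc] at hi
    rw [flipOn_of_not_mem (by omega)]
    exact hsupp i (by rw [Finset.mem_Icc]; omega)
  · rcases hi.eq_or_lt with rfl | hlt
    · rw [flipOn_of_mem (by omega), htop]
      rfl
    · rw [flipOn_of_not_mem (by omega)]
      exact habove i hlt

lemma exists_reachable_of_top_odd {s k : ℤ} (hs : s + 1 = 2 * k)
    (hsupp : ∀ i : ℤ, i ∉ Finset.Icc (0 : ℤ) (2 * n) → g i = false) (hg : memUps 0 n g)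
    (htop : g s = true) (habove : ∀ i, s < i → g i = false) :
    ∃ g', (∀ i : ℤ, i ∉ Finset.Icc (0 : ℤ) (2 * n) → g' i = false) ∧
      (∀ i, s ≤ i → g' i = false) ∧ memUps 0 n g' ∧ Reachable 0 n g' g := by
  have hs_mem : s ∈ Finset.Icc (0 : ℤ) (2 * n) := by
    by_contra h
    exact absurd (hsupp s h) (by simp [htop])
  rw [Finset.mem_Icc] at hs_mem
  have hkn : k < n := by
    by_contra h
    have hright : g (2 * n - 1) = g (2 * n) := hg.2.2
    rw [show 2 * n - 1 = s by omega, habove (2 * n) (by omega)] at hright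
    exact absurd htop (by simp [hright])
  have hg₀ : memUps 0 (k + 1) g :=
    ⟨fun i h0 hi => hg.1 i h0 (by omega), hg.2.1, by rw [habove _ (by omega), habove _ (by omega)]⟩
  have hg₁ : memUps k (k + 1) (flipOn 0 (k + 1) g) := by
    refine ⟨fun i h1 h2 => by omega, ?_, ?_⟩ <;>
      rw [flipOn_of_mem (by omega), flipOn_of_mem (by omega), habove _ (by omega),
        habove _ (by omega)]
  refine ⟨flipOn k (k + 1) (flipOn 0 (k + 1) g), fun i hi => ?_, fun i hi => ?_,
    memUps_flipOn (memUps_flipOn hg hg₀ le_rfl (by omega) (by omega)) hg₁ (by omega)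
      (by omega) (by omega),
    (Reachable.of_flipOn hg₁ (by omega) (by omega) (by omega)).trans
      (Reachable.of_flipOn hg₀ le_rfl (by omega) (by omega))⟩
  · rw [Finset.mem_Icc] at hi
    rw [flipOn_of_not_mem (by omega), flipOn_of_not_mem (by omega)]
    exact hsupp i (by rw [Finset.mem_Icc]; omega)
  · rcases hi.eq_or_lt with rfl | hlt
    · rw [flipOn_of_not_mem (by omega), flipOn_of_mem (by omega), htop]
      rfl
    · by_cases hin : i ≤ 2 * (k + 1)
      · rw [flipOn_of_mem (by omega), flipOn_of_mem (by omega), Bool.not_not]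
        exact habove i hlt
      · rw [flipOn_of_not_mem (by omega), flipOn_of_not_mem (by omega)]
        exact habove i hlt

lemma exists_reachable_of_top {s : ℤ}
    (hsupp : ∀ i : ℤ, i ∉ Finset.Icc (0 : ℤ) (2 * n) → g i = false) (hg : memUps 0 n g)
    (htop : g s = true) (habove : ∀ i, s < i → g i = false) :
    ∃ g', (∀ i : ℤ, i ∉ Finset.Icc (0 : ℤ) (2 * n) → g' i = false) ∧
      (∀ i, s ≤ i → g' i = false) ∧ memUps 0 n g' ∧ Reachable 0 n g' g := by
  obtain ⟨k, rfl | rfl⟩ := Int.even_or_odd' s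
  · exact exists_reachable_of_top_even hsupp hg htop habove
  · exact exists_reachable_of_top_odd (k := k + 1) (by ring) hsupp hg htop habove

lemma reachable_of_eq_false_of_le (m : ℕ) (g : ℤ → Bool)
    (hsupp : ∀ i : ℤ, i ∉ Finset.Icc (0 : ℤ) (2 * n) → g i = false)
    (hm : ∀ i : ℤ, m ≤ i → g i = false) (hg : memUps 0 n g) :
    Reachable 0 n (fun _ => false) g := by
  induction m generalizing g with
  | zero =>
    obtain rfl : g = fun _ => false := by
      funext i
      by_cases hi : 0 ≤ i
      · exact hm i (by simpa using hi)
      · exact hsupp i (by rw [Finset.mem_Icc]; omega)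
    exact Reachable.refl _
  | succ m ih =>
    by_cases htop : g m = true
    · obtain ⟨g', hsupp', hm', hg', hreach⟩ :=
        exists_reachable_of_top hsupp hg htop (fun i hi => hm i (by push_cast; omega))
      exact (ih g' hsupp' hm' hg').trans hreach
    · refine ih g hsupp (fun i hi => ?_) hg
      rcases hi.eq_or_lt with rfl | hlt
      · simpa using htop
      · exact hm i (by push_cast; omega)

end Descent

theorem ups_reachable_from_fock_general (n : ℕ) (g : ℤ → Bool)
    (hsupp : ∀ i : ℤ, i ∉ Finset.Icc (0 : ℤ) (2 * (n : ℤ)) → g i = false)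
    (hg : memUps 0 (n : ℤ) g) :
    Reachable 0 (n : ℤ) (fun _ => false) g :=
  reachable_of_eq_false_of_le (2 * n + 1) g hsupp
    (fun i hi => hsupp i (by rw [Finset.mem_Icc]; push_cast at hi; omega)) hg

/-- every configuration in `Υ̂_{0,n}` is reachable from the all-false
(Fock) configuration on `{0, …, 2n}` via charges from `Ξ̂(0,n)`. -/
theorem ups_reachable_from_fock (n : ℕ) (hn : 1 ≤ n) (g : ℤ → Bool)
    (hsupp : ∀ i : ℤ, i ∉ Finset.Icc (0 : ℤ) (2 * (n : ℤ)) → g i = false)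
    (hg : memUps 0 (n : ℤ) g) :
    Reachable 0 (n : ℤ) (fun _ => false) g :=
  ups_reachable_from_fock_general n g hsupp hg

end Nicolai
end

section
/- For every natural number n ≥ 1, the number of configurations g : {0, 1, …, 2n} → Bool belonging to Υ̂_{0,n} equals 2 · 3^{n−1}. (The number of classical open-edge supersymmetric ground states of the Nicolai model on I_{0,n} is 2 · 3^{n−1}.) -/
section Walks

variable {α : Type*} (R : α → α → Prop)

def IsWalk {m : ℕ} (p : Fin (m + 1) → α) : Prop :=
  ∀ i : Fin m, R (p i.castSucc) (p i.succ)

def isWalkSnocEquiv (s : Set α) (m : ℕ) :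
    {p : Fin (m + 2) → α // p 0 ∈ s ∧ IsWalk R p} ≃
      Σ q : {q : Fin (m + 1) → α // q 0 ∈ s ∧ IsWalk R q}, {a // R (q.1 (Fin.last m)) a} where
  toFun p :=
    ⟨⟨Fin.init p.1, p.2.1, fun i => p.2.2 i.castSucc⟩, p.1 (Fin.last _), p.2.2 (Fin.last m)⟩
  invFun x := ⟨Fin.snoc x.1.1 x.2.1, by simpa using x.1.2.1, by
    refine Fin.forall_fin_succ'.2 ⟨fun i => ?_, ?_⟩
    · rw [Fin.succ_castSucc, Fin.snoc_castSucc, Fin.snoc_castSucc]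
      exact x.1.2.2 i
    · simpa using x.2.2⟩
  left_inv p := Subtype.ext (Fin.snoc_init_self p.1)
  right_inv x := Sigma.subtype_ext (Subtype.ext (Fin.init_snoc (α := fun _ => α) _ _))
    (Fin.snoc_last (α := fun _ => α) _ _)

theorem Nat.card_isWalk [Finite α] (s : Set α) {k : ℕ} (hR : ∀ a, Nat.card {b // R a b} = k) :
    ∀ m : ℕ, Nat.card {p : Fin (m + 1) → α // p 0 ∈ s ∧ IsWalk R p} = Nat.card s * k ^ m
  | 0 => by
    rw [pow_zero, mul_one]
    exact Nat.card_congr <| (Equiv.funUnique (Fin 1) α).subtypeEquiv fun p => by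
      simp [IsWalk]
  | m + 1 => by
    have := Fintype.ofFinite α
    classical
    rw [Nat.card_congr (isWalkSnocEquiv R s m), Nat.card_sigma, Fintype.sum_congr _ _ fun _ => hR _,
      Finset.sum_const, Finset.card_univ, ← Nat.card_eq_fintype_card, Nat.card_isWalk s hR m]
    ring

end Walks

namespace Nicolai

def PairCompatible (a b : Bool × Bool) : Prop := b ≠ (!a.2, a.2)

lemma card_pairCompatible (a : Bool × Bool) : Nat.card {b // PairCompatible a b} = 3 := by
  unfold PairCompatible
  rw [Nat.card_eq_fintype_card]
  revert a
  decide

lemma card_diagonal : Nat.card {x : Bool × Bool | x.1 = x.2} = 2 := by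
  rw [Nat.card_eq_fintype_card]
  decide

lemma not_forbiddenAt_iff (g : ℤ → Bool) (i : ℤ) :
    ¬ forbiddenAt g i ↔
      PairCompatible (g (2 * (i - 1)), g (2 * (i - 1) + 1)) (g (2 * i), g (2 * i + 1)) := by
  have : 2 * (i - 1) + 1 = 2 * i - 1 := by ring
  unfold forbiddenAt PairCompatible
  rw [this]
  cases g (2 * i - 1) <;> cases g (2 * i) <;> cases g (2 * i + 1) <;> simp

def toPairs (m : ℕ) (g : ℤ → Bool) (i : Fin (m + 1)) : Bool × Bool :=
  (g (2 * i), g (2 * i + 1))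

/-- Inverse of `toPairs` on configurations supported on `{0, …, 2m+2}`: the last site `2m+2`
repeats the odd site `2m+1`, as the right boundary condition of `Υ̂_{0,m+1}` demands. -/
def ofPairs {m : ℕ} (p : Fin (m + 1) → Bool × Bool) (j : ℤ) : Bool :=
  if 0 ≤ j ∧ j ≤ 2 * m + 2 then
    if j % 2 = 0 ∧ j < 2 * m + 2 then (p (Fin.clamp (j / 2).toNat m)).1
    else (p (Fin.clamp (j / 2).toNat m)).2
  else false

section ofPairs

variable {m : ℕ} (p : Fin (m + 1) → Bool × Bool)

lemma ofPairs_two_mul (i : Fin (m + 1)) : ofPairs p (2 * i) = (p i).1 := by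
  have : Fin.clamp (2 * (i : ℤ) / 2).toNat m = i := Fin.ext (by simp [Fin.clamp]; omega)
  rw [ofPairs, if_pos (by omega), if_pos (by omega), this]

lemma ofPairs_two_mul_add_one (i : Fin (m + 1)) : ofPairs p (2 * i + 1) = (p i).2 := by
  have : Fin.clamp ((2 * (i : ℤ) + 1) / 2).toNat m = i := Fin.ext (by simp [Fin.clamp]; omega)
  rw [ofPairs, if_pos (by omega), if_neg (by omega), this]

lemma ofPairs_right_edge : ofPairs p (2 * (m + 1 : ℕ)) = (p (Fin.last m)).2 := by
  have : Fin.clamp (2 * ((m + 1 : ℕ) : ℤ) / 2).toNat m = Fin.last m :=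
    Fin.ext (by simp [Fin.clamp])
  rw [ofPairs, if_pos (by omega), if_neg (by omega), this]

lemma ofPairs_eq_false {j : ℤ} (hj : j ∉ Finset.Icc (0 : ℤ) (2 * (m + 1 : ℕ))) :
    ofPairs p j = false := by
  rw [Finset.mem_Icc] at hj
  rw [ofPairs, if_neg (by omega)]

lemma toPairs_ofPairs : toPairs m (ofPairs p) = p :=
  funext fun i => by rw [toPairs, ofPairs_two_mul, ofPairs_two_mul_add_one]

end ofPairs

lemma ofPairs_toPairs {m : ℕ} {g : ℤ → Bool}
    (hsupp : ∀ j ∉ Finset.Icc (0 : ℤ) (2 * (m + 1 : ℕ)), g j = false)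
    (hright : g (2 * (m + 1 : ℕ) - 1) = g (2 * (m + 1 : ℕ))) :
    ofPairs (toPairs m g) = g := by
  funext j
  by_cases hj : j ∈ Finset.Icc (0 : ℤ) (2 * (m + 1 : ℕ))
  · rw [Finset.mem_Icc] at hj
    rcases hj.2.eq_or_lt with rfl | hlt
    · rw [ofPairs_right_edge, ← hright, toPairs]
      push_cast
      congr 1
      ring
    · rcases Int.emod_two_eq_zero_or_one j with h | h
      · obtain ⟨i, rfl⟩ : ∃ i : Fin (m + 1), j = 2 * (i : ℕ) :=
          ⟨⟨(j / 2).toNat, by omega⟩, by simp; omega⟩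
        rw [ofPairs_two_mul, toPairs]
      · obtain ⟨i, rfl⟩ : ∃ i : Fin (m + 1), j = 2 * (i : ℕ) + 1 :=
          ⟨⟨(j / 2).toNat, by omega⟩, by simp; omega⟩
        rw [ofPairs_two_mul_add_one, toPairs]
  · rw [ofPairs_eq_false _ hj, hsupp j hj]

lemma isWalk_toPairs_iff (m : ℕ) (g : ℤ → Bool) :
    IsWalk PairCompatible (toPairs m g) ↔
      ∀ i : ℤ, 0 < i → i < (m + 1 : ℕ) → ¬ forbiddenAt g i := by
  constructor
  · intro h i h0 h1
    lift i to ℕ using h0.le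
    obtain ⟨j, rfl⟩ : ∃ j, i = j + 1 := ⟨i - 1, by omega⟩
    rw [not_forbiddenAt_iff]
    simpa [toPairs] using h ⟨j, by omega⟩
  · intro h i
    have := h (i + 1) (by omega) (by omega)
    rw [not_forbiddenAt_iff] at this
    simpa [toPairs] using this

lemma memUps_iff (m : ℕ) (g : ℤ → Bool) :
    memUps 0 (m + 1 : ℕ) g ↔
      ((toPairs m g 0).1 = (toPairs m g 0).2 ∧ IsWalk PairCompatible (toPairs m g)) ∧
        g (2 * (m + 1 : ℕ) - 1) = g (2 * (m + 1 : ℕ)) := by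
  rw [memUps, isWalk_toPairs_iff]
  exact ⟨fun ⟨h, h0, hr⟩ => ⟨⟨h0, h⟩, hr⟩, fun ⟨⟨h0, h⟩, hr⟩ => ⟨h, h0, hr⟩⟩

lemma ofPairs_injective (m : ℕ) : Function.Injective (ofPairs (m := m)) :=
  Function.LeftInverse.injective toPairs_ofPairs

lemma openEdgeStates_eq_image_ofPairs (m : ℕ) :
    {g : ℤ → Bool |
        (∀ i : ℤ, i ∉ Finset.Icc (0 : ℤ) (2 * (m + 1 : ℕ)) → g i = false) ∧
        memUps 0 (m + 1 : ℕ) g} =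
      ofPairs '' {p : Fin (m + 1) → Bool × Bool |
        p 0 ∈ {x : Bool × Bool | x.1 = x.2} ∧ IsWalk PairCompatible p} := by
  ext g
  constructor
  · rintro ⟨hsupp, hg⟩
    rw [memUps_iff] at hg
    exact ⟨toPairs m g, hg.1, ofPairs_toPairs hsupp hg.2⟩
  · rintro ⟨p, hp, rfl⟩
    refine ⟨fun j hj => ofPairs_eq_false p hj, ?_⟩
    rw [memUps_iff, toPairs_ofPairs, ofPairs_right_edge,
      show 2 * ((m + 1 : ℕ) : ℤ) - 1 = 2 * (Fin.last m : ℕ) + 1 by simp; ring,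
      ofPairs_two_mul_add_one]
    exact ⟨hp, rfl⟩

/-- the number of configurations on `{0, …, 2n}` belonging to `Υ̂_{0,n}`
is `2 · 3^{n−1}`. -/
theorem card_open_edge_susy_states (n : ℕ) (hn : 1 ≤ n) :
    {g : ℤ → Bool |
        (∀ i : ℤ, i ∉ Finset.Icc (0 : ℤ) (2 * (n : ℤ)) → g i = false) ∧
        memUps 0 (n : ℤ) g}.ncard
      = 2 * 3 ^ (n - 1) := by
  obtain ⟨m, rfl⟩ : ∃ m, n = m + 1 := ⟨n - 1, by omega⟩
  rw [openEdgeStates_eq_image_ofPairs, Set.ncard_image_of_injective _ (ofPairs_injective m),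
    ← Nat.card_coe_set_eq, Set.coe_ofPred, Nat.card_isWalk _ _ card_pairCompatible,
    card_diagonal, Nat.add_sub_cancel]

end Nicolai
end
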